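/- arXiv:1502.06799 — 2 statements merged into one kernel-verified Lean document; each statement's English description precedes it below -/
import Mathlib

section
/- For every integer T≥2, every a ∈ ℝ and every b ≥ 0: P[max_{k=1,...,T} Z_k ≤ a] ≥ Φ(a−b) · P[max_{k=1,...,T−1} Z_k ≤ b], where Φ denotes the standard normal cumulative distribution function. -/
/-!
Write `Z_k = ξ_{S_1} + Z'_{k-1}`, where `Z'` is the scenery sum along the shifted path
`(S_{i+1})_i`. On `{ξ_{S_1} ≤ a - b} ∩ {max_{k<T} Z'_k ≤ b}` we have `max_{k≤T} Z_k ≤ a`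
(for `k = 1` because `b ≥ 0`). Given the path, the second event is a lower set of the scenery,
so Harris' inequality in the single coordinate `ξ_{S_1}` makes it positively correlated with the
first one, of probability `Φ(a - b)`. Averaged over the path, the second event has the same
probability as `{max_{k<T} Z_k ≤ b}`: the i.i.d. scenery is translation invariant and
`(S_{n+1} - S_1)_n` is again the random walk.
-/

open MeasureTheory ProbabilityTheory
open scoped ENNReal

section Correlation

variable {Ω : Type*} [MeasurableSpace Ω] {P : Measure Ω}

lemma measure_mul_measure_le_measure_inter_of_isLowerSet {α : Type*} [LinearOrder α]
    [MeasurableSpace α] (μ : Measure α) [IsProbabilityMeasure μ] {A D : Set α}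
    (hA : IsLowerSet A) (hD : IsLowerSet D) : μ A * μ D ≤ μ (A ∩ D) := by
  rcases hA.total hD with hAD | hDA
  · rw [Set.inter_eq_left.2 hAD]
    exact mul_le_of_le_one_right' prob_le_one
  · rw [Set.inter_eq_right.2 hDA]
    exact mul_le_of_le_one_left' prob_le_one

lemma ProbabilityTheory.IndepFun.measure_preimage_eq_lintegral [IsFiniteMeasure P] {α β : Type*}
    [MeasurableSpace α] [MeasurableSpace β] {X : Ω → α} {Y : Ω → β} (hXY : IndepFun X Y P)
    (hX : Measurable X) (hY : Measurable Y) {D : Set (α × β)} (hD : MeasurableSet D) :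
    P ((fun ω => (X ω, Y ω)) ⁻¹' D) = ∫⁻ y, P ((fun ω => (X ω, y)) ⁻¹' D) ∂(P.map Y) := by
  rw [← Measure.map_apply (hX.prodMk hY) hD,
    (indepFun_iff_map_prod_eq_prod_map_map hX.aemeasurable hY.aemeasurable).1 hXY,
    Measure.prod_apply_symm hD]
  refine lintegral_congr fun y => ?_
  rw [Measure.map_apply hX (measurable_prodMk_right hD)]
  rfl

/-- Harris' inequality in a single real coordinate. -/
lemma ProbabilityTheory.IndepFun.measure_mul_le_measure_inter_of_isLowerSet
    [IsProbabilityMeasure P] {β : Type*}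
    [MeasurableSpace β] {X : Ω → ℝ} {Y : Ω → β} (hXY : IndepFun X Y P)
    (hX : Measurable X) (hY : Measurable Y) {A : Set ℝ} (hAm : MeasurableSet A)
    (hA : IsLowerSet A) {D : Set (ℝ × β)} (hDm : MeasurableSet D)
    (hD : ∀ y, IsLowerSet ((·, y) ⁻¹' D)) :
    P (X ⁻¹' A) * P ((fun ω => (X ω, Y ω)) ⁻¹' D)
      ≤ P ((fun ω => (X ω, Y ω)) ⁻¹' (A ×ˢ Set.univ ∩ D)) := by
  have : IsProbabilityMeasure (P.map X) := Measure.isProbabilityMeasure_map hX.aemeasurable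
  have hslice : ∀ (E : Set (ℝ × β)), MeasurableSet E → ∀ y,
      P ((fun ω => (X ω, y)) ⁻¹' E) = P.map X ((·, y) ⁻¹' E) := fun E hE y =>
    (Measure.map_apply hX (measurable_prodMk_right hE)).symm
  have hAD : MeasurableSet (A ×ˢ Set.univ ∩ D) := (hAm.prod .univ).inter hDm
  calc P (X ⁻¹' A) * P ((fun ω => (X ω, Y ω)) ⁻¹' D)
      = ∫⁻ y, P.map X A * P.map X ((·, y) ⁻¹' D) ∂(P.map Y) := by
        rw [IndepFun.measure_preimage_eq_lintegral hXY hX hY hDm, ← lintegral_const_mul' _ _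
          (measure_ne_top _ _), Measure.map_apply hX hAm]
        simp only [hslice D hDm]
    _ ≤ ∫⁻ y, P.map X ((·, y) ⁻¹' (A ×ˢ Set.univ ∩ D)) ∂(P.map Y) := by
        gcongr with y
        refine (measure_mul_measure_le_measure_inter_of_isLowerSet _ hA (hD y)).trans_eq ?_
        congr 1
        ext t
        simp
    _ = P ((fun ω => (X ω, Y ω)) ⁻¹' (A ×ˢ Set.univ ∩ D)) := by
        rw [IndepFun.measure_preimage_eq_lintegral hXY hX hY hAD]
        simp only [hslice _ hAD]

lemma ProbabilityTheory.iIndepFun.indepFun_update {ι β : Type*} [mβ : MeasurableSpace β]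
    [DecidableEq ι] {f : ι → Ω → β} (hf : ∀ i, Measurable (f i)) (h : iIndepFun f P)
    (j : ι) (c : β) :
    IndepFun (f j) (fun ω => Function.update (fun i => f i ω) j c) P := by
  have hle : ∀ i, MeasurableSpace.comap (f i) mβ ≤ ‹MeasurableSpace Ω› :=
    fun i => (hf i).comap_le
  have hind := indep_iSup_of_disjoint hle ((iIndepFun_iff_iIndep _ f P).1 h)
    (Set.disjoint_singleton_left.2 (by simp) : Disjoint {j} {j}ᶜ)
  refine indep_of_indep_of_le_right (indep_of_indep_of_le_left hind
    (le_iSup₂ (f := fun i (_ : i ∈ ({j} : Set ι)) => MeasurableSpace.comap (f i) mβ) j rfl)) ?_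
  have hupd : Measurable[⨆ i ∈ ({j} : Set ι)ᶜ, MeasurableSpace.comap (f i) mβ]
      (fun ω => Function.update (fun i => f i ω) j c) := by
    refine @measurable_pi_lambda _ _ _ (⨆ i ∈ ({j} : Set ι)ᶜ, MeasurableSpace.comap (f i) mβ) _ _
      fun i => ?_
    rcases eq_or_ne i j with rfl | hij
    · simp only [Function.update_self]
      exact measurable_const
    · simp only [Function.update_of_ne hij]
      exact (comap_measurable (f i)).mono
        (le_iSup₂ (f := fun i (_ : i ∈ ({j} : Set ι)ᶜ) => MeasurableSpace.comap (f i) mβ) i hij)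
        le_rfl
  exact hupd.comap_le

lemma ProbabilityTheory.iIndepFun.measure_mul_le_measure_inter_of_isLowerSet {ι : Type*}
    [DecidableEq ι] {f : ι → Ω → ℝ} (hf : ∀ i, Measurable (f i)) (h : iIndepFun f P) (j : ι)
    {A : Set ℝ} (hAm : MeasurableSet A) (hA : IsLowerSet A)
    {B : Set (ι → ℝ)} (hBm : MeasurableSet B) (hB : IsLowerSet B) :
    P (f j ⁻¹' A) * P ((fun ω i => f i ω) ⁻¹' B)
      ≤ P (f j ⁻¹' A ∩ (fun ω i => f i ω) ⁻¹' B) := by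
  have := h.isProbabilityMeasure
  set D : Set (ℝ × (ι → ℝ)) := (fun p => Function.update p.2 j p.1) ⁻¹' B
  have hD : (fun ω => (f j ω, Function.update (fun i => f i ω) j 0)) ⁻¹' D
      = (fun ω i => f i ω) ⁻¹' B := by
    ext ω
    simp [D, Function.update_idem]
  have hDm : MeasurableSet D := (measurable_update' (a := j)).comp measurable_swap hBm
  have key := IndepFun.measure_mul_le_measure_inter_of_isLowerSet (h.indepFun_update hf j 0)
    (hf j) (by fun_prop) hAm hA hDm
    (fun y => hB.preimage fun _ _ hst => Function.update_mono (f := y) (i := j) hst)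
  rwa [Set.preimage_inter, hD, Set.mk_preimage_prod, Set.preimage_univ, Set.inter_univ] at key

end Correlation

section Laws

variable {Ω : Type*} [MeasurableSpace Ω] {P : Measure Ω}

lemma ProbabilityTheory.iIndepFun.map_precomp_eq {ι β : Type*} [MeasurableSpace β]
    {f : ι → Ω → β} (hf : ∀ i, Measurable (f i)) (h : iIndepFun f P)
    (hident : ∀ i j, P.map (f i) = P.map (f j)) {e : ι → ι} (he : e.Injective) :
    P.map (fun ω i => f (e i) ω) = P.map (fun ω i => f i ω) := by
  rw [(h.precomp he).map_fun_eq_infinitePi_map (fun i => hf _),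
    h.map_fun_eq_infinitePi_map hf]
  congr 1
  funext i
  exact hident _ _

lemma map_sub_shift_eq_map_of_iIndepFun_increments {G : Type*} [AddCommGroup G]
    [MeasurableSpace G] [MeasurableAdd₂ G] [MeasurableSub₂ G] {S : ℕ → Ω → G}
    (hS : ∀ n, Measurable (S n)) (hS0 : ∀ ω, S 0 ω = 0)
    (hind : iIndepFun (fun n ω => S (n + 1) ω - S n ω) P)
    (hident : ∀ n, IdentDistrib (fun ω => S (n + 1) ω - S n ω) (fun ω => S 1 ω - S 0 ω) P P) :
    P.map (fun ω n => S (n + 1) ω - S 1 ω) = P.map (fun ω n => S n ω) := by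
  set Y : ℕ → Ω → G := fun n ω => S (n + 1) ω - S n ω
  have hY : ∀ n, Measurable (Y n) := fun n => (hS _).sub (hS n)
  set partialSums : (ℕ → G) → (ℕ → G) := fun y n => ∑ i ∈ Finset.range n, y i
  have hsums : Measurable partialSums :=
    measurable_pi_lambda _ fun n => Finset.measurable_sum _ fun i _ => measurable_pi_apply i
  have hshift : (fun ω n => S (n + 1) ω - S 1 ω) = partialSums ∘ fun ω n => Y (n + 1) ω := by
    ext ω n
    exact (Finset.sum_range_sub (fun i => S (i + 1) ω) n).symm
  have hwalk : (fun ω n => S n ω) = partialSums ∘ fun ω n => Y n ω := by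
    ext ω n
    simp only [Function.comp_apply, partialSums, Y]
    rw [Finset.sum_range_sub (fun i => S i ω), hS0, sub_zero]
  rw [hshift, hwalk, ← Measure.map_map hsums (measurable_pi_lambda _ fun n => hY _),
    ← Measure.map_map hsums (measurable_pi_lambda _ hY),
    hind.map_precomp_eq hY (fun i j => (hident i).map_eq.trans (hident j).map_eq.symm)
      (e := Nat.succ) Nat.succ_injective]

end Laws

lemma Finset.sum_Icc_one_add_one {M : Type*} [AddCommMonoid M] (f : ℕ → M) (m : ℕ) :
    ∑ i ∈ Finset.Icc 1 (m + 1), f i = f 1 + ∑ i ∈ Finset.Icc 1 m, f (i + 1) := by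
  rw [← Finset.add_sum_Ioc_eq_sum_Icc (by omega), ← Finset.Icc_add_one_left_eq_Ioc,
    ← Finset.map_add_right_Icc, Finset.sum_map]
  rfl

section RunningSums

variable {V : Type*}

def runningSumsLE (n : ℕ) (b : ℝ) (s : ℕ → V) : Set (V → ℝ) :=
  {x | ∀ k ∈ Finset.Icc 1 n, ∑ i ∈ Finset.Icc 1 k, x (s i) ≤ b}

lemma isLowerSet_runningSumsLE (n : ℕ) (b : ℝ) (s : ℕ → V) :
    IsLowerSet (runningSumsLE n b s) := fun _ _ hxy hy k hk =>
  (Finset.sum_le_sum fun i _ => hxy (s i)).trans (hy k hk)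

lemma runningSumsLE_add_const [Add V] (n : ℕ) (b : ℝ) (s : ℕ → V) (y : V) :
    runningSumsLE n b (fun i => s i + y) = (fun x v => x (v + y)) ⁻¹' runningSumsLE n b s :=
  rfl

lemma measurable_apply_prod {β : Type*} [MeasurableSpace β] [MeasurableSpace V]
    [Countable V] [MeasurableSingletonClass V] : Measurable fun q : (V → β) × V => q.1 q.2 :=
  measurable_from_prod_countable_left measurable_pi_apply

lemma measurableSet_runningSumsLE_prod [MeasurableSpace V] [Countable V]
    [MeasurableSingletonClass V] (n : ℕ) (b : ℝ) :
    MeasurableSet {p : (V → ℝ) × (ℕ → V) | p.1 ∈ runningSumsLE n b p.2} := by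
  change MeasurableSet
    {p : (V → ℝ) × (ℕ → V) | ∀ k ∈ Finset.Icc 1 n, ∑ i ∈ Finset.Icc 1 k, p.1 (p.2 i) ≤ b}
  simp only [Set.ofPred_forall]
  refine .iInter fun k => .iInter fun (_ : k ∈ Finset.Icc 1 n) =>
    measurableSet_le (Finset.measurable_sum _ fun i _ => ?_) measurable_const
  exact measurable_apply_prod.comp
    (by fun_prop : Measurable fun p : (V → ℝ) × (ℕ → V) => (p.1, p.2 i))

lemma measurableSet_runningSumsLE [MeasurableSpace V] [Countable V] [MeasurableSingletonClass V]
    (n : ℕ) (b : ℝ) (s : ℕ → V) : MeasurableSet (runningSumsLE n b s) :=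
  measurable_prodMk_right (measurableSet_runningSumsLE_prod n b)

lemma inter_runningSumsLE_shift_subset {n : ℕ} {a b : ℝ} (hb : 0 ≤ b) (s : ℕ → V) :
    {x : V → ℝ | x (s 1) ≤ a - b} ∩ runningSumsLE n b (fun i => s (i + 1))
      ⊆ runningSumsLE (n + 1) a s := by
  rintro x ⟨hfirst, hrest⟩ k hk
  obtain ⟨hk1, hkn⟩ := Finset.mem_Icc.1 hk
  obtain ⟨m, rfl⟩ : ∃ m, k = m + 1 := ⟨k - 1, by omega⟩
  have htail : ∑ i ∈ Finset.Icc 1 m, x (s (i + 1)) ≤ b := by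
    rcases Nat.eq_zero_or_pos m with rfl | hm
    · simpa using hb
    · exact hrest m (Finset.mem_Icc.2 ⟨hm, by omega⟩)
  rw [Finset.sum_Icc_one_add_one]
  have hfirst : x (s 1) ≤ a - b := hfirst
  linarith

end RunningSums

section Scenery

variable {Ω V : Type*} [MeasurableSpace Ω] {P : Measure Ω} [AddCommGroup V] [MeasurableSpace V]
  {ξ : V → Ω → ℝ} {S : ℕ → Ω → V}

lemma measure_preimage_runningSumsLE_add_const [Countable V] [MeasurableSingletonClass V]
    (hξ : ∀ v, Measurable (ξ v)) (hind : iIndepFun ξ P)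
    (hident : ∀ v w, P.map (ξ v) = P.map (ξ w))
    (n : ℕ) (b : ℝ) (s : ℕ → V) (y : V) :
    P ((fun ω v => ξ v ω) ⁻¹' runningSumsLE n b (fun i => s i + y))
      = P ((fun ω v => ξ v ω) ⁻¹' runningSumsLE n b s) := by
  rw [runningSumsLE_add_const, ← Set.preimage_comp,
    ← Measure.map_apply (by fun_prop) (measurableSet_runningSumsLE n b s),
    ← Measure.map_apply (by fun_prop) (measurableSet_runningSumsLE n b s)]
  exact congrArg (fun μ : Measure (V → ℝ) => μ (runningSumsLE n b s))
    (hind.map_precomp_eq hξ hident (add_left_injective y))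

lemma lintegral_map_path_shift [MeasurableAdd₂ V] [MeasurableSub₂ V]
    (hS : ∀ n, Measurable (S n)) (hS0 : ∀ ω, S 0 ω = 0)
    (hind : iIndepFun (fun n ω => S (n + 1) ω - S n ω) P)
    (hident : ∀ n, IdentDistrib (fun ω => S (n + 1) ω - S n ω) (fun ω => S 1 ω - S 0 ω) P P)
    {F : (ℕ → V) → ℝ≥0∞} (hF : Measurable F) (hFinv : ∀ s y, F (fun i => s i + y) = F s) :
    ∫⁻ s, F (fun i => s (i + 1)) ∂(P.map fun ω n => S n ω)
      = ∫⁻ s, F s ∂(P.map fun ω n => S n ω) := by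
  have hpath : Measurable fun ω n => S n ω := measurable_pi_lambda _ hS
  calc ∫⁻ s, F (fun i => s (i + 1)) ∂(P.map fun ω n => S n ω)
      = ∫⁻ ω, F (fun n => S (n + 1) ω - S 1 ω) ∂P := by
        rw [lintegral_map (f := fun s => F fun i => s (i + 1)) (hF.comp (by fun_prop)) hpath]
        refine lintegral_congr fun ω => ?_
        simpa only [sub_eq_add_neg] using (hFinv (fun n => S (n + 1) ω) (-S 1 ω)).symm
    _ = ∫⁻ s, F s ∂(P.map fun ω n => S n ω) := by
        rw [← map_sub_shift_eq_map_of_iIndepFun_increments hS hS0 hind hident,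
          lintegral_map hF (by fun_prop : Measurable fun ω n => S (n + 1) ω - S 1 ω)]

theorem measure_mul_measure_runningSumsLE_le [Countable V] [MeasurableSingletonClass V]
    [MeasurableAdd₂ V] [MeasurableSub₂ V] (γ : Measure ℝ)
    (hξ : ∀ v, Measurable (ξ v)) (hξlaw : ∀ v, P.map (ξ v) = γ) (hξind : iIndepFun ξ P)
    (hS : ∀ n, Measurable (S n)) (hS0 : ∀ ω, S 0 ω = 0)
    (hSind : iIndepFun (fun n ω => S (n + 1) ω - S n ω) P)
    (hSident : ∀ n, IdentDistrib (fun ω => S (n + 1) ω - S n ω) (fun ω => S 1 ω - S 0 ω) P P)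
    (hξS : IndepFun (fun ω v => ξ v ω) (fun ω n => S n ω) P)
    (n : ℕ) {a b : ℝ} (hb : 0 ≤ b) :
    γ (Set.Iic (a - b)) * P {ω | (fun v => ξ v ω) ∈ runningSumsLE n b fun k => S k ω}
      ≤ P {ω | (fun v => ξ v ω) ∈ runningSumsLE (n + 1) a fun k => S k ω} := by
  classical
  have := hξind.isProbabilityMeasure
  set W : Ω → V → ℝ := fun ω v => ξ v ω
  have hW : Measurable W := measurable_pi_lambda _ hξ
  have hpath : Measurable fun ω n => S n ω := measurable_pi_lambda _ hS
  set F : (ℕ → V) → ℝ≥0∞ := fun s => P (W ⁻¹' runningSumsLE n b s)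
  have hF : Measurable F := by
    convert measurable_measure_prodMk_right (μ := P.map W)
      (measurableSet_runningSumsLE_prod n b) using 2 with s
    exact (Measure.map_apply hW (measurableSet_runningSumsLE n b s)).symm
  have hFinv : ∀ s y, F (fun i => s i + y) = F s :=
    measure_preimage_runningSumsLE_add_const hξ hξind
      (fun v w => (hξlaw v).trans (hξlaw w).symm) n b
  have hharris : ∀ s : ℕ → V, γ (Set.Iic (a - b)) * F (fun i => s (i + 1))
      ≤ P (W ⁻¹' ({x | x (s 1) ≤ a - b} ∩ runningSumsLE n b fun i => s (i + 1))) := by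
    intro s
    rw [← hξlaw (s 1), Measure.map_apply (hξ _) measurableSet_Iic]
    exact hξind.measure_mul_le_measure_inter_of_isLowerSet hξ (s 1) measurableSet_Iic
      (isLowerSet_Iic (a - b)) (measurableSet_runningSumsLE _ _ _) (isLowerSet_runningSumsLE _ _ _)
  have hD : MeasurableSet {p : (V → ℝ) × (ℕ → V) |
      p.1 (p.2 1) ≤ a - b ∧ p.1 ∈ runningSumsLE n b fun i => p.2 (i + 1)} :=
    (measurableSet_le (measurable_apply_prod.comp
      (by fun_prop : Measurable fun p : (V → ℝ) × (ℕ → V) => (p.1, p.2 1))) measurable_const).inter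
      ((measurableSet_runningSumsLE_prod n b).preimage
        (by fun_prop : Measurable fun p : (V → ℝ) × (ℕ → V) => (p.1, fun i => p.2 (i + 1))))
  calc γ (Set.Iic (a - b)) * P {ω | W ω ∈ runningSumsLE n b fun k => S k ω}
      = γ (Set.Iic (a - b)) * ∫⁻ s, F s ∂(P.map fun ω n => S n ω) := by
        congr 1
        exact IndepFun.measure_preimage_eq_lintegral hξS hW hpath
          (measurableSet_runningSumsLE_prod n b)
    _ = γ (Set.Iic (a - b)) * ∫⁻ s, F (fun i => s (i + 1)) ∂(P.map fun ω n => S n ω) := by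
        rw [lintegral_map_path_shift hS hS0 hSind hSident hF hFinv]
    _ ≤ ∫⁻ s, P (W ⁻¹' ({x | x (s 1) ≤ a - b} ∩ runningSumsLE n b fun i => s (i + 1)))
          ∂(P.map fun ω n => S n ω) := by
        refine (lintegral_const_mul _ ?_).symm.trans_le (lintegral_mono hharris)
        exact hF.comp (by fun_prop)
    _ = P {ω | W ω (S 1 ω) ≤ a - b ∧ W ω ∈ runningSumsLE n b fun i => S (i + 1) ω} :=
        (IndepFun.measure_preimage_eq_lintegral hξS hW hpath hD).symm
    _ ≤ P {ω | W ω ∈ runningSumsLE (n + 1) a fun k => S k ω} :=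
        measure_mono fun ω hω => inter_runningSumsLE_shift_subset hb _ hω

end Scenery

theorem stmt12_general
    {Ω : Type*} [MeasurableSpace Ω] (P : Measure Ω) [IsProbabilityMeasure P]
    (d : ℕ)
    (S : ℕ → Ω → (Fin d → ℤ)) (hSmeas : ∀ n, Measurable (S n))
    (hS0 : ∀ ω, S 0 ω = 0)
    (hSindep : iIndepFun
      (fun n ω => S (n + 1) ω - S n ω) P)
    (hSident : ∀ n : ℕ,
      IdentDistrib (fun ω => S (n + 1) ω - S n ω) (fun ω => S 1 ω - S 0 ω) P P)
    (ξ : (Fin d → ℤ) → Ω → ℝ) (hξmeas : ∀ x, Measurable (ξ x))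
    (hξlaw : ∀ x, Measure.map (ξ x) P = gaussianReal 0 1)
    (hξindep : iIndepFun ξ P)
    (hξS : IndepFun (fun ω => fun x : Fin d → ℤ => ξ x ω)
      (fun ω => fun n : ℕ => S n ω) P)
    (Z : ℕ → Ω → ℝ) (hZ : ∀ n ω, Z n ω = ∑ i ∈ Finset.Icc 1 n, ξ (S i ω) ω) :
    ∀ T : ℕ, 2 ≤ T → ∀ a : ℝ, ∀ b : ℝ, 0 ≤ b →
      (gaussianReal 0 1 (Set.Iic (a - b))).toReal *
          (P {ω | ∀ k ∈ Finset.Icc 1 (T - 1), Z k ω ≤ b}).toReal ≤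
        (P {ω | ∀ k ∈ Finset.Icc 1 T, Z k ω ≤ a}).toReal := by
  intro T hT a b hb
  obtain ⟨n, rfl⟩ : ∃ n, T = n + 1 := ⟨T - 1, by omega⟩
  have hevent : ∀ m c, {ω | ∀ k ∈ Finset.Icc 1 m, Z k ω ≤ c}
      = {ω | (fun v => ξ v ω) ∈ runningSumsLE m c fun k => S k ω} := by
    intro m c
    simp only [hZ]
    rfl
  rw [Nat.add_sub_cancel, hevent, hevent, ← ENNReal.toReal_mul]
  exact ENNReal.toReal_mono (measure_ne_top _ _) <|
    measure_mul_measure_runningSumsLE_le _ hξmeas hξlaw hξindep hSmeas hS0 hSindep hSident hξS n hb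

/-- Let `d ≥ 1`, let `(S_n)` be a random walk on `ℤ^d` (i.i.d. increments, `S 0 = 0`) and let
`(ξ_x)_{x ∈ ℤ^d}` be i.i.d. standard Gaussians independent of `S`.  Let
`Z_n = ∑_{i=1}^n ξ_{S_i}` be the random walk in random scenery.  Then for every integer
`T ≥ 2`, every `a ∈ ℝ` and every `b ≥ 0`,
`P[max_{k=1,…,T} Z_k ≤ a] ≥ Φ(a - b) · P[max_{k=1,…,T-1} Z_k ≤ b]`, where `Φ` is the
standard normal cumulative distribution function. -/
theorem stmt12
    {Ω : Type*} [MeasurableSpace Ω] (P : Measure Ω) [IsProbabilityMeasure P]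
    (d : ℕ) (hd : 1 ≤ d)
    (S : ℕ → Ω → (Fin d → ℤ)) (hSmeas : ∀ n, Measurable (S n))
    (hS0 : ∀ ω, S 0 ω = 0)
    (hSindep : iIndepFun
      (fun n ω => S (n + 1) ω - S n ω) P)
    (hSident : ∀ n : ℕ,
      IdentDistrib (fun ω => S (n + 1) ω - S n ω) (fun ω => S 1 ω - S 0 ω) P P)
    (ξ : (Fin d → ℤ) → Ω → ℝ) (hξmeas : ∀ x, Measurable (ξ x))
    (hξlaw : ∀ x, Measure.map (ξ x) P = gaussianReal 0 1)
    (hξindep : iIndepFun ξ P)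
    (hξS : IndepFun (fun ω => fun x : Fin d → ℤ => ξ x ω)
      (fun ω => fun n : ℕ => S n ω) P)
    (Z : ℕ → Ω → ℝ) (hZ : ∀ n ω, Z n ω = ∑ i ∈ Finset.Icc 1 n, ξ (S i ω) ω) :
    ∀ T : ℕ, 2 ≤ T → ∀ a : ℝ, ∀ b : ℝ, 0 ≤ b →
      (gaussianReal 0 1 (Set.Iic (a - b))).toReal *
          (P {ω | ∀ k ∈ Finset.Icc 1 (T - 1), Z k ω ≤ b}).toReal ≤
        (P {ω | ∀ k ∈ Finset.Icc 1 T, Z k ω ≤ a}).toReal :=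
  stmt12_general P d S hSmeas hS0 hSindep hSident ξ hξmeas hξlaw hξindep hξS Z hZ
end

section
/- Suppose there is c₀>0 and T₁ such that E[(Σ_{l=1}^T e^{Z_l})^{-1}] ≥ c₀ T^{H−1} ℓ(T) for all integers T≥T₁. Then for every β > 1−H there exist c>0 and T₀ such that for all integers T≥T₀: P[max_{k=1,...,T} Z_k ≤ β log T] ≥ c T^{H−1} ℓ(T) e^{−√(4β log T)}. -/
/-!
Write `F_T = (∑_{l ≤ T} e^{Z_l})⁻¹`, `L = β log T` and `a = √(4L)`. Pointwise
`F_T ≤ e^a 1{max Z ≤ L} + e^{-L} + e^{a - a²} e^{-a Z_1}`: off the event some `e^{Z_k}` exceeds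
`e^L`, and on it `F_T ≤ e^{-Z_1}`, which is at most `e^a` unless `Z_1 < -a`. The Gaussian moment
`E e^{-a Z_1} = e^{a²/2}` then gives `E F_T ≤ e^a P(max Z ≤ L) + 2 T^{-β}`. On the other hand
`E F_T` decreases in `T`, so the assumed lower bound, with `ℓ(2x)/ℓ(x) → 1`, yields
`E F_T ≥ c T^{H - 1 - η}` for a small `η > 0`, and this dominates `T^{-β}` because `β > 1 - H`.
-/

open MeasureTheory Filter ProbabilityTheory Real Finset Topology

lemma exp_neg_le_exp_add_exp_mul {a : ℝ} (ha : 1 ≤ a) (x : ℝ) :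
    exp (-x) ≤ exp a + exp (a - a ^ 2) * exp (-a * x) := by
  rw [← exp_add]
  rcases le_or_gt (-a) x with hx | hx
  · linarith [exp_le_exp.mpr (show -x ≤ a by linarith), exp_pos (a - a ^ 2 + -a * x)]
  · have : -x ≤ a - a ^ 2 + -a * x := by nlinarith
    linarith [exp_le_exp.mpr this, exp_pos a]

lemma inv_sum_exp_le_exp_neg {ι : Type*} {s : Finset ι} {i : ι} (hi : i ∈ s) (z : ι → ℝ) :
    (∑ j ∈ s, exp (z j))⁻¹ ≤ exp (-z i) := by
  rw [exp_neg]
  exact inv_anti₀ (exp_pos _) (single_le_sum (fun j _ => (exp_pos (z j)).le) hi)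

lemma inv_sum_exp_le {ι : Type*} {s : Finset ι} {i : ι} (hi : i ∈ s) {a : ℝ} (ha : 1 ≤ a)
    (L : ℝ) (z : ι → ℝ) :
    (∑ j ∈ s, exp (z j))⁻¹ ≤
      (if ∀ k ∈ s, z k ≤ L then exp a else 0) + exp (-L) + exp (a - a ^ 2) * exp (-a * z i) := by
  have hweight := (mul_pos (exp_pos (a - a ^ 2)) (exp_pos (-a * z i))).le
  split_ifs with hL
  · linarith [inv_sum_exp_le_exp_neg hi z, exp_neg_le_exp_add_exp_mul ha (z i), exp_pos (-L)]
  · push Not at hL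
    obtain ⟨k, hk, hLk⟩ := hL
    linarith [inv_sum_exp_le_exp_neg hk z, exp_le_exp.mpr (neg_lt_neg hLk).le]

lemma eventually_forall_mul_rpow_pow_le {ℓ : ℝ → ℝ} (hℓpos : ∀ x > 0, 0 < ℓ x)
    (hℓ : Tendsto (fun x => ℓ (2 * x) / ℓ x) atTop (𝓝 1)) {η : ℝ} (hη : 0 < η) :
    ∀ᶠ x in atTop, ∀ k : ℕ, ℓ x * ((2 : ℝ) ^ (-η)) ^ k ≤ ℓ (2 ^ k * x) := by
  have hlt : (2 : ℝ) ^ (-η) < 1 := rpow_lt_one_of_one_lt_of_neg one_lt_two (neg_lt_zero.mpr hη)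
  have hdoubling : ∀ᶠ x in atTop, ∀ y, x ≤ y → (2 : ℝ) ^ (-η) * ℓ y ≤ ℓ (2 * y) := by
    rw [eventually_forall_ge_atTop]
    filter_upwards [hℓ.eventually (eventually_gt_nhds hlt), eventually_gt_atTop 0] with y hy hy0
    exact ((lt_div_iff₀ (hℓpos y hy0)).mp hy).le
  filter_upwards [hdoubling, eventually_gt_atTop 0] with x hx hx0 k
  induction k with
  | zero => simp
  | succ k ih =>
    have hxk : x ≤ 2 ^ k * x := le_mul_of_one_le_left hx0.le (one_le_pow₀ one_le_two)
    calc ℓ x * ((2 : ℝ) ^ (-η)) ^ (k + 1) = (2 : ℝ) ^ (-η) * (ℓ x * ((2 : ℝ) ^ (-η)) ^ k) := by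
          ring
      _ ≤ (2 : ℝ) ^ (-η) * ℓ (2 ^ k * x) := by gcongr
      _ ≤ ℓ (2 * (2 ^ k * x)) := hx _ hxk
      _ = ℓ (2 ^ (k + 1) * x) := by rw [pow_succ']; ring_nf

lemma exists_le_two_pow_mul_and_two_pow_le_two_mul {x₀ T : ℕ} (hx₀ : 1 ≤ x₀) (hT : T ≠ 0) :
    ∃ k : ℕ, T ≤ 2 ^ k * x₀ ∧ 2 ^ k ≤ 2 * T :=
  ⟨Nat.log 2 T + 1,
    (Nat.lt_pow_succ_log_self one_lt_two T).le.trans (Nat.le_mul_of_pos_right _ hx₀),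
    by rw [pow_succ']; exact Nat.mul_le_mul_left 2 (Nat.pow_log_le_self 2 hT)⟩

/-- `ℓ` is not assumed measurable, so it is only controlled along the dyadic sequences `2 ^ k x₀`;
the monotonicity of `g` fills the gaps. -/
lemma exists_mul_rpow_le_of_antitoneOn {g : ℕ → ℝ} (hg : AntitoneOn g (Set.Ici 1))
    {ℓ : ℝ → ℝ} (hℓpos : ∀ x > 0, 0 < ℓ x)
    (hℓ : Tendsto (fun x => ℓ (2 * x) / ℓ x) atTop (𝓝 1))
    {α c₀ η : ℝ} (hα : α ≤ 0) (hc₀ : 0 < c₀) (hη : 0 < η) {T₁ : ℕ}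
    (hlower : ∀ T : ℕ, T₁ ≤ T → c₀ * (T : ℝ) ^ α * ℓ T ≤ g T) :
    ∃ c > 0, ∀ᶠ T : ℕ in atTop, c * (T : ℝ) ^ (α - η) ≤ g T := by
  obtain ⟨x₀, hdyadic, hx₀⟩ :=
    ((tendsto_natCast_atTop_atTop.eventually (eventually_forall_mul_rpow_pow_le hℓpos hℓ hη)).and
      (eventually_ge_atTop (max T₁ 1))).exists
  have hx₀1 : 1 ≤ x₀ := le_of_max_le_right hx₀
  have hx₀pos : (0 : ℝ) < x₀ := by exact_mod_cast hx₀1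
  refine ⟨c₀ * (2 * x₀) ^ α * ℓ x₀ * 2 ^ (-η), by have := hℓpos x₀ hx₀pos; positivity, ?_⟩
  filter_upwards [eventually_ge_atTop 1] with T hT
  obtain ⟨k, hTX, hkT⟩ := exists_le_two_pow_mul_and_two_pow_le_two_mul (T := T) hx₀1 (by omega)
  have hTpos : (0 : ℝ) < T := by exact_mod_cast hT
  have hTX' : (T : ℝ) ≤ 2 ^ k * x₀ := by exact_mod_cast hTX
  have hkT' : (2 : ℝ) ^ k ≤ 2 * T := by exact_mod_cast hkT
  have hXT : (2 : ℝ) ^ k * x₀ ≤ 2 * x₀ * T := by nlinarith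
  have hpow : (2 * T : ℝ) ^ (-η) ≤ ((2 : ℝ) ^ (-η)) ^ k := by
    rw [rpow_pow_comm zero_le_two]
    exact rpow_le_rpow_of_nonpos (by positivity) hkT' (neg_nonpos.mpr hη.le)
  calc c₀ * (2 * x₀) ^ α * ℓ x₀ * 2 ^ (-η) * (T : ℝ) ^ (α - η)
      = c₀ * (2 * x₀ * T) ^ α * (ℓ x₀ * (2 * T : ℝ) ^ (-η)) := by
        rw [mul_rpow (by positivity) hTpos.le, mul_rpow zero_le_two hTpos.le,
          rpow_sub hTpos, rpow_neg hTpos.le]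
        ring
    _ ≤ c₀ * ((2 : ℝ) ^ k * x₀) ^ α * ℓ ((2 : ℝ) ^ k * x₀) := by
        have hℓx₀ := (hℓpos x₀ hx₀pos).le
        gcongr ?_ * ?_ * ?_
        · exact rpow_le_rpow_of_nonpos (by positivity) hXT hα
        · exact (mul_le_mul_of_nonneg_left hpow hℓx₀).trans (hdyadic k)
    _ = c₀ * ((2 ^ k * x₀ : ℕ) : ℝ) ^ α * ℓ ((2 ^ k * x₀ : ℕ) : ℝ) := by push_cast; rfl
    _ ≤ g (2 ^ k * x₀) :=
        hlower _ ((le_of_max_le_left hx₀).trans (Nat.le_mul_of_pos_left _ (Nat.two_pow_pos k)))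
    _ ≤ g T := hg (Set.mem_Ici.mpr hT) (Set.mem_Ici.mpr (hT.trans hTX)) hTX

section
variable {Ω : Type*}

noncomputable def invSumExp (Z : ℕ → Ω → ℝ) (T : ℕ) (ω : Ω) : ℝ := (∑ l ∈ Icc 1 T, exp (Z l ω))⁻¹

variable {Z : ℕ → Ω → ℝ}

lemma invSumExp_nonneg (T : ℕ) (ω : Ω) : 0 ≤ invSumExp Z T ω :=
  inv_nonneg.mpr (sum_nonneg fun _ _ => (exp_pos _).le)

lemma invSumExp_le_of_le {S T : ℕ} (hT : 1 ≤ T) (hTS : T ≤ S) (ω : Ω) :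
    invSumExp Z S ω ≤ invSumExp Z T ω :=
  inv_anti₀ (sum_pos (fun _ _ => exp_pos _) ⟨1, mem_Icc.mpr ⟨le_rfl, hT⟩⟩)
    (sum_le_sum_of_subset_of_nonneg (Icc_subset_Icc_right hTS) fun _ _ _ => (exp_pos _).le)

variable [MeasurableSpace Ω] {P : Measure Ω} [IsProbabilityMeasure P]

lemma measurable_invSumExp (hZ : ∀ n, Measurable (Z n)) (T : ℕ) : Measurable (invSumExp Z T) :=
  (Finset.measurable_sum _ fun l _ => measurable_exp.comp (hZ l)).inv

lemma integrable_exp_mul_of_map_eq_gaussianReal {X : Ω → ℝ} {μ : ℝ} {v : NNReal}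
    (hX : P.map X = gaussianReal μ v) (t : ℝ) : Integrable (fun ω => exp (t * X ω)) P :=
  mgf_pos_iff.mp (by rw [mgf_gaussianReal hX]; exact exp_pos _)

lemma integrable_invSumExp (hZ : ∀ n, Measurable (Z n)) (hZ1 : P.map (Z 1) = gaussianReal 0 1)
    {T : ℕ} (hT : 1 ≤ T) : Integrable (invSumExp Z T) P := by
  refine (integrable_exp_mul_of_map_eq_gaussianReal hZ1 (-1)).mono
    (measurable_invSumExp hZ T).aestronglyMeasurable (ae_of_all _ fun ω => ?_)
  rw [norm_of_nonneg (invSumExp_nonneg T ω), norm_of_nonneg (exp_pos _).le, neg_one_mul]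
  exact inv_sum_exp_le_exp_neg (mem_Icc.mpr ⟨le_rfl, hT⟩) _

lemma antitoneOn_integral_invSumExp (hZ : ∀ n, Measurable (Z n))
    (hZ1 : P.map (Z 1) = gaussianReal 0 1) :
    AntitoneOn (fun T => ∫ ω, invSumExp Z T ω ∂P) (Set.Ici 1) := fun _ hT _ _ hTS =>
  integral_mono (integrable_invSumExp hZ hZ1 (le_trans hT hTS)) (integrable_invSumExp hZ hZ1 hT)
    (invSumExp_le_of_le hT hTS)

lemma integral_invSumExp_le (hZ : ∀ n, Measurable (Z n)) (hZ1 : P.map (Z 1) = gaussianReal 0 1)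
    {T : ℕ} (hT : 1 ≤ T) {a : ℝ} (ha : 1 ≤ a) (L : ℝ) :
    ∫ ω, invSumExp Z T ω ∂P ≤
      exp a * P.real {ω | ∀ k ∈ Icc 1 T, Z k ω ≤ L} + exp (-L) + exp (a - a ^ 2 / 2) := by
  set A := {ω | ∀ k ∈ Icc 1 T, Z k ω ≤ L}
  have hA : MeasurableSet A := by
    simp only [A, Set.ofPred_forall]
    exact .biInter (Icc 1 T).countable_toSet fun k _ => measurableSet_le (hZ k) measurable_const
  have hind : Integrable (A.indicator fun _ => exp a) P := (integrable_const _).indicator hA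
  have hweight : Integrable (fun ω => exp (a - a ^ 2) * exp (-a * Z 1 ω)) P :=
    (integrable_exp_mul_of_map_eq_gaussianReal hZ1 (-a)).const_mul _
  have hpointwise : ∀ ω, invSumExp Z T ω ≤
      A.indicator (fun _ => exp a) ω + exp (-L) + exp (a - a ^ 2) * exp (-a * Z 1 ω) := fun ω => by
    rw [invSumExp, Set.indicator_apply]
    convert inv_sum_exp_le (mem_Icc.mpr ⟨le_rfl, hT⟩) ha L (Z · ω) using 3
    rfl
  calc ∫ ω, invSumExp Z T ω ∂P
      ≤ ∫ ω, A.indicator (fun _ => exp a) ω + exp (-L) + exp (a - a ^ 2) * exp (-a * Z 1 ω) ∂P :=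
        integral_mono (integrable_invSumExp hZ hZ1 hT) ((hind.add (integrable_const _)).add hweight)
          hpointwise
    _ = exp a * P.real A + exp (-L) + exp (a - a ^ 2) * exp (a ^ 2 / 2) := by
        rw [integral_add (by exact hind.add (integrable_const _)) hweight,
          integral_add hind (integrable_const _), integral_indicator_const _ hA, integral_const,
          integral_const_mul, ← mgf, mgf_gaussianReal hZ1]
        simp only [probReal_univ, smul_eq_mul, one_mul, NNReal.coe_one]
        ring_nf
    _ = exp a * P.real A + exp (-L) + exp (a - a ^ 2 / 2) := by
        rw [← exp_add]; ring_nf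

lemma integral_invSumExp_le_of_four_le (hZ : ∀ n, Measurable (Z n))
    (hZ1 : P.map (Z 1) = gaussianReal 0 1) {T : ℕ} (hT : 1 ≤ T) {β : ℝ}
    (hlog : 4 ≤ β * log T) :
    ∫ ω, invSumExp Z T ω ∂P ≤
      exp (√(4 * β * log T)) * P.real {ω | ∀ k ∈ Icc 1 T, Z k ω ≤ β * log T} +
        2 * (T : ℝ) ^ (-β) := by
  set L := β * log T
  set a := √(4 * β * log T)
  have ha_sq : a ^ 2 = 4 * L := by rw [sq_sqrt (by nlinarith)]; ring
  have ha_nonneg : 0 ≤ a := sqrt_nonneg _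
  have ha_one : 1 ≤ a := by nlinarith
  have ha_le : a ≤ L := by nlinarith
  have hgauss : exp (a - a ^ 2 / 2) ≤ exp (-L) := exp_le_exp.mpr (by linarith)
  have hL : exp (-L) = (T : ℝ) ^ (-β) := by
    rw [rpow_def_of_pos (by exact_mod_cast hT), mul_neg, mul_comm]
  linarith [integral_invSumExp_le hZ hZ1 (P := P) hT ha_one L]

end

/-- Let `Z = (Z_n)_{n ≥ 1}` be a real-valued stochastic process with `Z_1 ~ N(0,1)`,
`H ∈ (0,1)` and `ℓ` slowly varying and positive.  Suppose there are `c₀ > 0` and `T₁`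
such that `E[(∑_{l=1}^T e^{Z_l})⁻¹] ≥ c₀ T^{H-1} ℓ(T)` for every integer `T ≥ T₁`.
Then for every `β > 1 - H` there are `c > 0` and `T₀` such that for all `T ≥ T₀`,
`P[max_{k=1,…,T} Z_k ≤ β log T] ≥ c T^{H-1} ℓ(T) e^{-√(4β log T)}`. -/
theorem stmt17
    {Ω : Type*} [MeasurableSpace Ω] (P : Measure Ω) [IsProbabilityMeasure P]
    (Z : ℕ → Ω → ℝ) (hZmeas : ∀ n, Measurable (Z n))
    (hZ1 : Measure.map (Z 1) P = gaussianReal 0 1)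
    (H : ℝ) (hH : H ∈ Set.Ioo (0 : ℝ) 1)
    (ℓ : ℝ → ℝ) (hℓpos : ∀ x > (0 : ℝ), 0 < ℓ x)
    (hℓslow : ∀ lam > (0 : ℝ),
      Tendsto (fun x : ℝ => ℓ (lam * x) / ℓ x) atTop (nhds 1))
    (c₀ : ℝ) (hc₀ : 0 < c₀) (T₁ : ℕ)
    (hlower : ∀ T : ℕ, T₁ ≤ T →
      c₀ * (T : ℝ) ^ (H - 1) * ℓ T ≤
        ∫ ω, (∑ l ∈ Finset.Icc 1 T, Real.exp (Z l ω))⁻¹ ∂P) :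
    ∀ β : ℝ, 1 - H < β → ∃ c > (0 : ℝ), ∃ T₀ : ℕ, ∀ T ≥ T₀,
      c * (T : ℝ) ^ (H - 1) * ℓ T * Real.exp (-Real.sqrt (4 * β * Real.log T)) ≤
        (P {ω | ∀ k ∈ Finset.Icc 1 T, Z k ω ≤ β * Real.log T}).toReal := by
  intro β hβ
  have hβ0 : 0 < β := by linarith [hH.2]
  have hη : 0 < (β - (1 - H)) / 2 := by linarith
  set η := (β - (1 - H)) / 2
  obtain ⟨c, hc, hpoly⟩ := exists_mul_rpow_le_of_antitoneOn
    (antitoneOn_integral_invSumExp hZmeas hZ1) hℓpos (hℓslow 2 two_pos)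
    (by linarith [hH.2]) hc₀ hη hlower
  -- `T ^ (-β)` is negligible against `T ^ (H - 1 - η)` since `H - 1 - η + β = η > 0`.
  have hnegligible : ∀ᶠ T : ℕ in atTop, 4 * (T : ℝ) ^ (-β) ≤ c * (T : ℝ) ^ (H - 1 - η) := by
    filter_upwards [(tendsto_rpow_atTop hη).comp
      tendsto_natCast_atTop_atTop |>.eventually_ge_atTop (4 / c), eventually_gt_atTop 0]
      with T hT hT0
    have hT0' : (0 : ℝ) < T := by exact_mod_cast hT0
    rw [show H - 1 - η = η + -β by ring, rpow_add hT0', ← mul_assoc]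
    gcongr
    exact (div_le_iff₀' hc).mp hT
  have hlog : ∀ᶠ T : ℕ in atTop, 4 ≤ β * log T :=
    ((tendsto_log_atTop.comp tendsto_natCast_atTop_atTop).const_mul_atTop hβ0).eventually_ge_atTop 4
  obtain ⟨T₀, hT₀⟩ := eventually_atTop.mp (hpoly.and (hnegligible.and (hlog.and
    ((eventually_ge_atTop T₁).and (eventually_ge_atTop 1)))))
  refine ⟨c₀ / 2, by positivity, T₀, fun T hT => ?_⟩
  obtain ⟨hpolyT, hnegT, hlogT, hT₁, hT1⟩ := hT₀ T hT
  have hupper := integral_invSumExp_le_of_four_le hZmeas hZ1 (P := P) hT1 hlogT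
  have hlowerT : c₀ * (T : ℝ) ^ (H - 1) * ℓ T ≤ ∫ ω, invSumExp Z T ω ∂P := hlower T hT₁
  rw [exp_neg, ← div_eq_mul_inv, div_le_iff₀ (exp_pos _)]
  change _ ≤ P.real _ * _
  linarith
end
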